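/- For any Smullyan model M, the property FPT (every M-predicate has an M-fixed point) is equivalent to the property F-Tarski+ (there is no M-predicate H such that False_M^+ = Φ(H) ∩ Sent_M^+). -/

import Mathlib

/-- A Smullyan model over a set of symbols `α`: a set `pred` of predicates
(finite strings over `α`) satisfying the prefix-freeness requirement (†), together
with a naming function `phi` assigning a set of strings to each string
(only its values on `pred` are relevant). -/
structure SmullyanModel (α : Type) where
  pred : Set (List α)
  prefixFree : ∀ H ∈ pred, ∀ X : List α, X ≠ [] → H ++ X ∉ pred
  phi : List α → Set (List α)

namespace SmullyanModel

variable {α : Type} (M : SmullyanModel α)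

/-- The set of `M`-sentences: strings of the form `H ++ X` with `H` a predicate. -/
def sent : Set (List α) := {S | ∃ H ∈ M.pred, ∃ X : List α, S = H ++ X}

/-- `Sent_M^+ = Sent_M \ Pred_M`. -/
def sentPlus : Set (List α) := M.sent \ M.pred

/-- `True_M`: the set of true `M`-sentences. -/
def trueSet : Set (List α) := {S | ∃ H ∈ M.pred, ∃ X ∈ M.phi H, S = H ++ X}

/-- `True_M^+ = True_M \ Pred_M`. -/
def truePlus : Set (List α) := M.trueSet \ M.pred

/-- `False_M = Sent_M \ True_M`. -/
def falseSet : Set (List α) := M.sent \ M.trueSet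

/-- `False_M^+ = Sent_M^+ \ True_M^+`. -/
def falsePlus : Set (List α) := M.sentPlus \ M.truePlus

/-- `M ⊨ S`. -/
def Sat (S : List α) : Prop := S ∈ M.trueSet

/-- `S ∈ Sent_M^+` is an `M`-fixed point of `H` if `M ⊨ S ↔ M ⊨ HS`. -/
def IsFixedPoint (H S : List α) : Prop :=
  S ∈ M.sentPlus ∧ (M.Sat S ↔ M.Sat (H ++ S))

/-- `M` is an `n`-Smullyan model (with negation symbol `n : α`):
for every predicate `H`, `nH` is a predicate and `Φ(nH) = Σ* \ Φ(H)`. -/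
def IsNModel (n : α) : Prop :=
  ∀ H ∈ M.pred, (n :: H) ∈ M.pred ∧ M.phi (n :: H) = {X : List α | X ∉ M.phi H}

/-- `M` is an `r`-Smullyan model (with repeat symbol `r : α`):
for every predicate `H`, `rH` is a predicate and `Φ(rH) = {K ∈ Pred : KK ∈ Φ(H)}`. -/
def IsRModel (r : α) : Prop :=
  ∀ H ∈ M.pred, (r :: H) ∈ M.pred ∧
    M.phi (r :: H) = {K : List α | K ∈ M.pred ∧ K ++ K ∈ M.phi H}

/-- FPT: every `M`-predicate has an `M`-fixed point. -/
def FPT : Prop := ∀ H ∈ M.pred, ∃ S : List α, M.IsFixedPoint H S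

/-- T-Tarski: no `M`-predicate names `True_M`. -/
def TTarski : Prop := ¬ ∃ H ∈ M.pred, M.phi H = M.trueSet

/-- F-Tarski: no `M`-predicate names `False_M`. -/
def FTarski : Prop := ¬ ∃ H ∈ M.pred, M.phi H = M.falseSet

/-- T-Tarski⁺: there is no `M`-predicate `H` with `True_M⁺ = Φ(H) ∩ Sent_M⁺`. -/
def TTarskiPlus : Prop := ¬ ∃ H ∈ M.pred, M.truePlus = M.phi H ∩ M.sentPlus

/-- F-Tarski⁺: there is no `M`-predicate `H` with `False_M⁺ = Φ(H) ∩ Sent_M⁺`. -/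
def FTarskiPlus : Prop := ¬ ∃ H ∈ M.pred, M.falsePlus = M.phi H ∩ M.sentPlus

/-- mG1. -/
def MG1 : Prop :=
  ∀ H ∈ M.pred, M.phi H ⊆ M.trueSet →
    ∃ S ∈ M.sent, M.Sat S ∧ S ∉ M.phi H

/-- mG1⁺. -/
def MG1Plus : Prop :=
  ∀ H ∈ M.pred, M.phi H ∩ M.sentPlus ⊆ M.truePlus →
    ∃ S ∈ M.sentPlus, M.Sat S ∧ S ∉ M.phi H

/-- G1 (for `n`-Smullyan models). -/
def G1 (n : α) : Prop :=
  ∀ H ∈ M.pred, M.phi H ⊆ M.trueSet →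
    ∃ S ∈ M.sent, S ∉ M.phi H ∧ (n :: S) ∉ M.phi H

/-- G1⁺ (for `n`-Smullyan models). -/
def G1Plus (n : α) : Prop :=
  ∀ H ∈ M.pred, M.phi H ∩ M.sentPlus ⊆ M.truePlus →
    ∃ S ∈ M.sentPlus, S ∉ M.phi H ∧ (n :: S) ∉ M.phi H

/-- The predicate set of a simple model: strings `X♯` where `X` contains no `♯`. -/
def simplePred (sharp : α) : Set (List α) :=
  {L | ∃ X : List α, sharp ∉ X ∧ L = X ++ [sharp]}

end SmullyanModel

/-! By prefix-freeness, `H` is the only predicate that is a prefix of `HS`, so `M ⊨ HS` iff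
`S ∈ Φ(H)`. Hence `S ∈ Sent⁺` fails to be a fixed point of `H` exactly when
`S` is false iff `S ∈ Φ(H)`, and `H` has no fixed point iff `Φ(H)` names `False⁺` within `Sent⁺`. -/

namespace SmullyanModel

variable {α : Type} {M : SmullyanModel α}

lemma pred_eq_of_append_eq_append {H K X Y : List α} (hH : H ∈ M.pred) (hK : K ∈ M.pred)
    (h : H ++ X = K ++ Y) : H = K := by
  rcases List.prefix_or_prefix_of_prefix ⟨X, h⟩ (List.prefix_append K Y) with ⟨Z, rfl⟩ | ⟨Z, rfl⟩
  · by_contra hne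
    exact M.prefixFree H hH Z (by simpa using hne) hK
  · by_contra hne
    exact M.prefixFree K hK Z (by simpa using Ne.symm hne) hH

lemma sat_append_iff {H : List α} (hH : H ∈ M.pred) (S : List α) :
    M.Sat (H ++ S) ↔ S ∈ M.phi H := by
  refine ⟨?_, fun hS => ⟨H, hH, S, hS, rfl⟩⟩
  rintro ⟨K, hK, X, hX, hEq⟩
  obtain rfl := pred_eq_of_append_eq_append hH hK hEq
  rwa [List.append_cancel_left hEq]

lemma mem_falsePlus_iff {S : List α} : S ∈ M.falsePlus ↔ S ∈ M.sentPlus ∧ ¬ M.Sat S := by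
  simp only [falsePlus, truePlus, sentPlus, Sat, Set.mem_sdiff]
  tauto

lemma isFixedPoint_iff {H S : List α} (hH : H ∈ M.pred) :
    M.IsFixedPoint H S ↔ S ∈ M.sentPlus ∧ (M.Sat S ↔ S ∈ M.phi H) := by
  rw [IsFixedPoint, sat_append_iff hH]

lemma falsePlus_eq_phi_inter_sentPlus_iff {H : List α} (hH : H ∈ M.pred) :
    M.falsePlus = M.phi H ∩ M.sentPlus ↔ ∀ S, ¬ M.IsFixedPoint H S := by
  simp only [Set.ext_iff, mem_falsePlus_iff, isFixedPoint_iff hH, Set.mem_inter_iff]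
  exact forall_congr' fun S => by tauto

end SmullyanModel

theorem stmt_5_general {α : Type} (M : SmullyanModel α) :
    M.FPT ↔ M.FTarskiPlus := by
  simp only [SmullyanModel.FPT, SmullyanModel.FTarskiPlus, not_exists, not_and]
  refine forall₂_congr fun H hH => ?_
  rw [SmullyanModel.falsePlus_eq_phi_inter_sentPlus_iff hH, not_forall_not]

/-- FPT and F-Tarski⁺ are equivalent for any Smullyan model. -/
theorem stmt_5 {α : Type} [Nonempty α] (M : SmullyanModel α) :
    M.FPT ↔ M.FTarskiPlus :=
  stmt_5_general M
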